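/- The Lobachevsky splines satisfy the three-term recurrence relation: for n ≥ 2 and all x ∈ ℝ, (n−1) f_n(x) = ((na + x)/(2a)) f_{n−1}(x + a) + ((na − x)/(2a)) f_{n−1}(x − a), where for n = 2 the function f₁ is taken right-continuous on [−a, a) (i.e., f₁(x) = 1/(2a) for −a ≤ x < a, 0 otherwise). -/

import Mathlib

/-- Truncated power function: `y₊^m = y^m` if `y > 0`, else `0`. -/
noncomputable def tpow (y : ℝ) (m : ℕ) : ℝ := if 0 < y then y ^ m else 0

/-- Lobachevsky splines: `g a 1` is the (right-continuous) uniform density on `[-a, a)`,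
and for `n ≥ 2`, `g a n` is given by the explicit truncated-power formula. -/
noncomputable def g (a : ℝ) (n : ℕ) (x : ℝ) : ℝ :=
  if n = 1 then (if -a ≤ x ∧ x < a then 1 / (2 * a) else 0)
  else (1 / ((2 * a) ^ n * (Nat.factorial (n - 1)))) *
    ∑ k ∈ Finset.range (n + 1),
      (-1 : ℝ) ^ k * (n.choose k) * tpow (x + ((n : ℝ) - 2 * k) * a) (n - 1)

/-!
Up to normalisation, `g a n` is the `n`-th central difference (step `2a`) of `t ↦ t₊^(n-1)`,
and also for `n = 1` if `t₊^0` is read as the right-continuous Heaviside step. Since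
`t * t₊^m = t₊^(m+1)` in both cases, the recurrence reduces to the termwise identity
`C(n+1,k) (x + (n+1-2k)a) = C(n,k) ((n+1)a + x) - C(n,k-1) ((n+1)a - x)`,
which is Pascal's rule together with `(n+1) C(n,k-1) = k C(n+1,k)`.
-/

open Finset

/-- The `n`-th central difference of `P` with step `2 * a`. -/
noncomputable def centralDiff (P : ℝ → ℝ) (a : ℝ) (n : ℕ) (x : ℝ) : ℝ :=
  ∑ k ∈ range (n + 1), (-1 : ℝ) ^ k * n.choose k * P (x + ((n : ℝ) - 2 * k) * a)

lemma choose_succ_mul_eq_sub (n k : ℕ) (a x : ℝ) :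
    ((n + 1).choose (k + 1) : ℝ) * (x + (((n + 1 : ℕ) : ℝ) - 2 * (k + 1 : ℕ)) * a) =
      n.choose (k + 1) * ((n + 1) * a + x) - n.choose k * ((n + 1) * a - x) := by
  have pascal : ((n + 1).choose (k + 1) : ℝ) = n.choose k + n.choose (k + 1) := by
    exact_mod_cast Nat.choose_succ_succ n k
  have absorb : ((n : ℝ) + 1) * n.choose k = (k + 1) * (n + 1).choose (k + 1) := by
    rw [mul_comm (k + 1 : ℝ)]
    exact_mod_cast Nat.add_one_mul_choose_eq n k
  push_cast
  linear_combination (x + (n + 1) * a) * pascal + 2 * a * absorb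

theorem centralDiff_succ {P Q : ℝ → ℝ} (hPQ : ∀ t, t * P t = Q t) (a : ℝ) (n : ℕ) (x : ℝ) :
    centralDiff Q a (n + 1) x =
      ((n + 1) * a + x) * centralDiff P a n (x + a) +
      ((n + 1) * a - x) * centralDiff P a n (x - a) := by
  set t : ℕ → ℝ := fun k => x + (((n + 1 : ℕ) : ℝ) - 2 * k) * a
  have h_plus : centralDiff P a n (x + a) =
      ∑ k ∈ range (n + 2), (-1 : ℝ) ^ k * n.choose k * P (t k) := by
    rw [sum_range_succ, Nat.choose_succ_self, Nat.cast_zero, mul_zero, zero_mul, add_zero]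
    refine sum_congr rfl fun k _ => ?_
    simp only [t]; push_cast; ring_nf
  have h_minus : centralDiff P a n (x - a) =
      ∑ k ∈ range (n + 1), (-1 : ℝ) ^ k * n.choose k * P (t (k + 1)) := by
    refine sum_congr rfl fun k _ => ?_
    simp only [t]; push_cast; ring_nf
  rw [h_plus, h_minus, mul_sum, mul_sum, sum_range_succ' _ (n + 1), centralDiff,
    sum_range_succ' _ (n + 1), add_right_comm, ← sum_add_distrib]
  congr 1
  · refine sum_congr rfl fun k _ => ?_
    rw [← hPQ]
    linear_combination (-1 : ℝ) ^ (k + 1) * P (t (k + 1)) * choose_succ_mul_eq_sub n k a x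
  · rw [← hPQ]; simp only [t, Nat.choose_zero_right]; push_cast; ring

/-- `t₊^m`, except that for `m = 0` it is the right-continuous step, matching `g a 1`. -/
noncomputable def truncPow (m : ℕ) (t : ℝ) : ℝ :=
  if m = 0 then (Set.Ici 0).indicator 1 t else tpow t m

lemma mul_truncPow (m : ℕ) (t : ℝ) : t * truncPow m t = truncPow (m + 1) t := by
  rcases lt_trichotomy t 0 with ht | rfl | ht
  · simp [truncPow, tpow, ht.not_ge, ht.not_gt]
  · simp [truncPow, tpow]
  · rcases m with _ | m <;> simp [truncPow, tpow, ht, ht.le, pow_succ']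

lemma centralDiff_truncPow_zero_one {a : ℝ} (ha : 0 < a) (x : ℝ) :
    centralDiff (truncPow 0) a 1 x = if -a ≤ x ∧ x < a then 1 else 0 := by
  simp only [centralDiff, truncPow, sum_range_succ, sum_range_zero, Set.indicator, Set.mem_Ici]
  norm_num
  split_ifs <;> grind

lemma g_eq_centralDiff {a : ℝ} (ha : 0 < a) (m : ℕ) (x : ℝ) :
    g a (m + 1) x = centralDiff (truncPow m) a (m + 1) x / ((2 * a) ^ (m + 1) * m.factorial) := by
  rcases m with _ | m
  · rw [g, if_pos rfl, centralDiff_truncPow_zero_one ha]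
    split_ifs <;> simp
  · rw [g, if_neg (by omega), one_div, inv_mul_eq_div]
    rfl

theorem lob_three_term_recurrence (a : ℝ) (ha : 0 < a) (n : ℕ) (hn : 2 ≤ n) (x : ℝ) :
    ((n : ℝ) - 1) * g a n x =
      (((n : ℝ) * a + x) / (2 * a)) * g a (n - 1) (x + a) +
      (((n : ℝ) * a - x) / (2 * a)) * g a (n - 1) (x - a) := by
  obtain ⟨m, rfl⟩ : ∃ m, n = m + 2 := ⟨n - 2, by omega⟩
  rw [show m + 2 - 1 = m + 1 by omega, g_eq_centralDiff ha, g_eq_centralDiff ha,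
    g_eq_centralDiff ha, centralDiff_succ (mul_truncPow m)]
  simp only [Nat.factorial_succ]
  push_cast
  field_simp
  ring
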